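/- Set f(z) := σ_R(2σ_R(z) − 4σ_R(z − 1/2)) where σ_R(z) = max{0,z}. Let k ≥ 1 be an integer and z ∈ [0,1]. Write z = (i_k + z_k)·2^{1−k} with i_k ∈ {0,...,2^{k−1}} a nonnegative integer and z_k ∈ [0,1). Then f^k(z) = 2z_k if 0 ≤ z_k ≤ 1/2, and f^k(z) = 2(1 − z_k) if 1/2 < z_k < 1, where f^k denotes k-fold composition. -/
import Mathlib


open MeasureTheory
open scoped ENNReal

noncomputable section

/-- The ReLU. -/
def relu (z : ℝ) : ℝ := max 0 z

/-- The ReLU triangle map `f(z) = σ_R(2σ_R(z) − 4σ_R(z − 1/2))`. -/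
def triangleF (z : ℝ) : ℝ := relu (2 * relu z - 4 * relu (z - 1/2))

lemma tri_left {z : ℝ} (h0 : 0 ≤ z) (h1 : z ≤ 1/2) : triangleF z = 2 * z := by
  unfold triangleF relu
  rw [max_eq_right h0, max_eq_left (by linarith : z - 1/2 ≤ 0)]
  rw [max_eq_right (by linarith)]
  ring

lemma tri_right {z : ℝ} (h0 : 1/2 ≤ z) (h1 : z ≤ 1) : triangleF z = 2 - 2 * z := by
  unfold triangleF relu
  rw [max_eq_right (by linarith : (0:ℝ) ≤ z), max_eq_right (by linarith : (0:ℝ) ≤ z - 1/2)]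
  rw [max_eq_right (by linarith)]
  ring

lemma key (k : ℕ) (hk : 1 ≤ k) : ∀ z ∈ Set.Icc (0:ℝ) 1, ∀ (i : ℕ) (zk : ℝ),
    i ≤ 2 ^ (k - 1) → zk ∈ Set.Ico (0:ℝ) 1 →
    z = ((i : ℝ) + zk) * (2:ℝ) ^ ((1:ℤ) - k) →
    triangleF^[k] z = if zk ≤ 1/2 then 2 * zk else 2 * (1 - zk) := by
  induction k, hk using Nat.le_induction with
  | base =>
    intro z hz i zk hi hzk hdecomp
    have hp : (2:ℝ) ^ ((1:ℤ) - (1:ℕ)) = 1 := by norm_num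
    rw [hp, mul_one] at hdecomp
    have hi1 : i ≤ 1 := by simpa using hi
    have h0 := hz.1
    have h1 := hz.2
    interval_cases i
    · -- i = 0, z = zk
      simp only [Nat.cast_zero, zero_add] at hdecomp
      subst hdecomp
      rw [Function.iterate_one]
      split_ifs with h
      · exact tri_left hzk.1 h
      · rw [tri_right (by linarith) (by linarith)]; ring
    · -- i = 1, z = 1 + zk, so zk = 0, z = 1
      simp only [Nat.cast_one] at hdecomp
      have hzkz : zk = 0 := by
        have := hzk.1
        linarith
      subst hzkz
      rw [add_zero] at hdecomp
      subst hdecomp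
      rw [Function.iterate_one, tri_right (by norm_num) le_rfl]
      norm_num
  | succ k hk IH =>
    intro z hz i zk hi hzk hdecomp
    have hp : (2:ℝ) ^ ((1:ℤ) - ((k+1:ℕ):ℤ)) = 1 / 2 ^ k := by
      push_cast
      rw [show (1:ℤ) - ((k:ℤ)+1) = -(k:ℤ) by ring, zpow_neg, zpow_natCast]
      ring
    have hq : (2:ℝ) ^ ((1:ℤ) - (k:ℕ)) = 2 / 2 ^ k := by
      rw [zpow_sub₀ (two_ne_zero), zpow_one, zpow_natCast]
    have h2k : (0:ℝ) < 2 ^ k := by positivity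
    have h2k1 : (0:ℝ) < 2 ^ (k-1) := by positivity
    have hkk : 2 ^ k = 2 * 2 ^ (k - 1) := by
      rw [← pow_succ']
      congr 1
      omega
    have hkkR : (2:ℝ) ^ k = 2 * 2 ^ (k - 1) := by exact_mod_cast congrArg (Nat.cast : ℕ → ℝ) hkk
    simp only [Nat.add_sub_cancel] at hi
    rw [hp] at hdecomp
    have hsum : (i:ℝ) + zk = z * 2 ^ k := by rw [hdecomp]; field_simp
    have hzk0 := hzk.1
    have hzk1 := hzk.2
    rw [Function.iterate_succ_apply]
    by_cases hle : z ≤ 1/2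
    · -- left half: f z = 2 z
      rw [tri_left hz.1 hle]
      have hi' : i ≤ 2 ^ (k - 1) := by
        have hmul : z * 2 ^ (k-1) ≤ (1/2) * 2 ^ (k-1) :=
          mul_le_mul_of_nonneg_right hle h2k1.le
        have hR : (i:ℝ) ≤ 2 ^ (k-1) := by nlinarith
        exact_mod_cast hR
      apply IH (2*z) ⟨by linarith [hz.1], by linarith⟩ i zk hi' hzk
      rw [hdecomp, hq]
      ring
    · -- right half: f z = 2 - 2 z
      push_neg at hle
      rw [tri_right hle.le hz.2]
      have hile : (i:ℝ) + zk ≤ 2 ^ k := by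
        have := mul_le_mul_of_nonneg_right hz.2 h2k.le
        nlinarith
      have higt : (2:ℝ) ^ (k-1) < (i:ℝ) + zk := by
        have := mul_lt_mul_of_pos_right hle h2k
        nlinarith
      rcases eq_or_lt_of_le hzk0 with hzkz | hzkpos
      · -- zk = 0
        rw [← hzkz] at hsum hile higt ⊢
        rw [add_zero] at hsum hile higt
        have hiN : i ≤ 2 ^ k := by exact_mod_cast hile
        have hiG : 2 ^ (k-1) < i := by exact_mod_cast higt
        set j := 2 ^ k - i with hj
        have hjle : j ≤ 2 ^ (k - 1) := by omega
        have hjsum : j + i = 2 ^ k := by omega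
        have hjR : (j:ℝ) = 2 ^ k - i := by
          have h := congrArg (Nat.cast : ℕ → ℝ) hjsum
          push_cast at h
          linarith
        rw [IH (2 - 2*z) ⟨by linarith [hz.2], by linarith⟩ j 0 hjle
          ⟨le_rfl, by norm_num⟩ (by rw [hq, hjR]; field_simp; linarith)]
      · -- zk > 0
        have hiN : i + 1 ≤ 2 ^ k := by
          have : (i:ℝ) < 2 ^ k := by linarith
          have : i < 2 ^ k := by exact_mod_cast this
          omega
        have hiG : 2 ^ (k-1) ≤ i := by
          have : (2:ℝ) ^ (k-1) < (i:ℝ) + 1 := by linarith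
          have hn : 2 ^ (k-1) < i + 1 := by exact_mod_cast this
          omega
        set j := 2 ^ k - i - 1 with hj
        have hjle : j ≤ 2 ^ (k - 1) := by omega
        have hjsum : j + i + 1 = 2 ^ k := by omega
        have hjR : (j:ℝ) = 2 ^ k - i - 1 := by
          have h := congrArg (Nat.cast : ℕ → ℝ) hjsum
          push_cast at h
          linarith
        rw [IH (2 - 2*z) ⟨by linarith [hz.2], by linarith⟩ j (1 - zk) hjle
          ⟨by linarith, by linarith⟩ (by rw [hq, hjR]; field_simp; linarith)]
        split_ifs with h1 h2 h3 <;> linarith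

/-- Lemma 3.10: the explicit sawtooth form of `f^k` for the ReLU triangle map. -/
theorem triangle_iterate_shape (k : ℕ) (hk : 1 ≤ k) (z : ℝ) (hz : z ∈ Set.Icc (0:ℝ) 1)
    (i : ℕ) (zk : ℝ) (hi : i ≤ 2 ^ (k - 1)) (hzk : zk ∈ Set.Ico (0:ℝ) 1)
    (hdecomp : z = ((i : ℝ) + zk) * (2:ℝ) ^ ((1:ℤ) - k)) :
    triangleF^[k] z = if zk ≤ 1/2 then 2 * zk else 2 * (1 - zk) := by
  exact key k hk z hz i zk hi hzk hdecomp
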